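/- arXiv:1811.07409 — 2 statements merged into one kernel-verified Lean document; each statement's English description precedes it below -/
import Mathlib

section
/- Suppose F ∈ ℂ^{ν×ν}, G ∈ ℂ^{ν×m}, S ∈ ℂ^{ν×ν}, L ∈ ℂ^{m×ν} with σ(F) ∩ σ(S) = ∅, and let P be the unique invertible solution of FP + GL = PS. If Π solves AΠ + BL = ΠS with σ(A)∩σ(S)=∅, and HP = CΠ, then for every eigenvalue s_i of S with eigenvector w (S w = s_i w) such that s_i ∉ σ(A) ∪ σ(F), the tangential interpolation condition C(s_iI−A)⁻¹B·(Lw) = H(s_iI−F)⁻¹G·(Lw) holds. -/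
/-!
Since `S w = s w`, the Sylvester equation `A Π + B L = Π S` applied to `w` reads
`(s I - A) Π w = B L w`, so `Π w = (s I - A)⁻¹ B L w` and `C (s I - A)⁻¹ B L w = C Π w`.
The same computation gives `H (s I - F)⁻¹ G L w = H P w`, and `H P = C Π` closes the argument.
-/

open Matrix

namespace Matrix

variable {R : Type*} [CommRing R] {n m k p : Type*}
  [Fintype n] [DecidableEq n] [Fintype m] [Fintype k]

theorem isUnit_smul_one_sub_of_notMem_spectrum {A : Matrix n n R} {s : R}
    (hs : s ∉ spectrum R A) : IsUnit (s • (1 : Matrix n n R) - A) := by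
  simpa only [Algebra.algebraMap_eq_smul_one] using spectrum.notMem_iff.mp hs

theorem smul_one_sub_mulVec_of_sylvester {A : Matrix n n R} {B : Matrix n m R}
    {L : Matrix m k R} {S : Matrix k k R} {X : Matrix n k R}
    (hX : A * X + B * L = X * S) {s : R} {w : k → R} (hw : S *ᵥ w = s • w) :
    (s • (1 : Matrix n n R) - A) *ᵥ (X *ᵥ w) = B *ᵥ (L *ᵥ w) := by
  have hXw : X *ᵥ (S *ᵥ w) = A *ᵥ (X *ᵥ w) + B *ᵥ (L *ᵥ w) := by
    simp only [mulVec_mulVec, ← hX, add_mulVec]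
  rw [hw, mulVec_smul] at hXw
  rw [sub_mulVec, smul_mulVec, one_mulVec, hXw, add_sub_cancel_left]

theorem mul_resolvent_mul_mulVec_of_sylvester {A : Matrix n n R} {B : Matrix n m R}
    {L : Matrix m k R} {S : Matrix k k R} {X : Matrix n k R}
    (hX : A * X + B * L = X * S) {s : R} {w : k → R} (hw : S *ᵥ w = s • w)
    (hs : s ∉ spectrum R A) (C : Matrix p n R) :
    (C * (s • (1 : Matrix n n R) - A)⁻¹ * B) *ᵥ (L *ᵥ w) = (C * X) *ᵥ w := by
  have hdet : IsUnit (s • (1 : Matrix n n R) - A).det :=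
    (isUnit_iff_isUnit_det _).mp (isUnit_smul_one_sub_of_notMem_spectrum hs)
  rw [← mulVec_mulVec, ← smul_one_sub_mulVec_of_sylvester hX hw, ← mulVec_mulVec,
    mulVec_mulVec _ (s • 1 - A)⁻¹, nonsing_inv_mul _ hdet, one_mulVec, mulVec_mulVec]

end Matrix

theorem tangential_interpolation_general {n m p ν : ℕ}
    (A : Matrix (Fin n) (Fin n) ℂ) (B : Matrix (Fin n) (Fin m) ℂ)
    (C : Matrix (Fin p) (Fin n) ℂ)
    (F : Matrix (Fin ν) (Fin ν) ℂ) (G : Matrix (Fin ν) (Fin m) ℂ)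
    (H : Matrix (Fin p) (Fin ν) ℂ)
    (S : Matrix (Fin ν) (Fin ν) ℂ) (L : Matrix (Fin m) (Fin ν) ℂ)
    (P : Matrix (Fin ν) (Fin ν) ℂ)
    (PiFull : Matrix (Fin n) (Fin ν) ℂ)
    (hP : F * P + G * L = P * S)
    (hPi : A * PiFull + B * L = PiFull * S)
    (hMM : H * P = C * PiFull)
    (s : ℂ) (w : Fin ν → ℂ)
    (hw : S *ᵥ w = s • w)
    (hs : s ∉ spectrum ℂ A ∪ spectrum ℂ F) :
    (C * (s • (1 : Matrix (Fin n) (Fin n) ℂ) - A)⁻¹ * B) *ᵥ (L *ᵥ w) =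
      (H * (s • (1 : Matrix (Fin ν) (Fin ν) ℂ) - F)⁻¹ * G) *ᵥ (L *ᵥ w) := by
  rw [Set.mem_union, not_or] at hs
  rw [mul_resolvent_mul_mulVec_of_sylvester hPi hw hs.1,
    mul_resolvent_mul_mulVec_of_sylvester hP hw hs.2, hMM]

/-- Tangential interpolation from moment matching: if `HP = CΠ` with `Π`, `P`
solving the corresponding Sylvester equations, then for any eigenvalue `s` of
`S` with eigenvector `w` (with `s ∉ σ(A) ∪ σ(F)`), the tangential interpolation
condition `C(sI−A)⁻¹B(Lw) = H(sI−F)⁻¹G(Lw)` holds. -/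
theorem tangential_interpolation {n m p ν : ℕ}
    (A : Matrix (Fin n) (Fin n) ℂ) (B : Matrix (Fin n) (Fin m) ℂ)
    (C : Matrix (Fin p) (Fin n) ℂ)
    (F : Matrix (Fin ν) (Fin ν) ℂ) (G : Matrix (Fin ν) (Fin m) ℂ)
    (H : Matrix (Fin p) (Fin ν) ℂ)
    (S : Matrix (Fin ν) (Fin ν) ℂ) (L : Matrix (Fin m) (Fin ν) ℂ)
    (P Pi : Matrix (Fin ν) (Fin ν) ℂ)
    (PiFull : Matrix (Fin n) (Fin ν) ℂ)
    (hFS : spectrum ℂ F ∩ spectrum ℂ S = ∅)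
    (hAS : spectrum ℂ A ∩ spectrum ℂ S = ∅)
    (hPdet : IsUnit P.det)
    (hP : F * P + G * L = P * S)
    (hPi : A * PiFull + B * L = PiFull * S)
    (hMM : H * P = C * PiFull)
    (s : ℂ) (w : Fin ν → ℂ)
    (hw : S *ᵥ w = s • w)
    (hs : s ∉ spectrum ℂ A ∪ spectrum ℂ F) :
    (C * (s • (1 : Matrix (Fin n) (Fin n) ℂ) - A)⁻¹ * B) *ᵥ (L *ᵥ w) =
      (H * (s • (1 : Matrix (Fin ν) (Fin ν) ℂ) - F)⁻¹ * G) *ᵥ (L *ᵥ w) :=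
  tangential_interpolation_general A B C F G H S L P PiFull hP hPi hMM s w hw hs
end

section
/- Let 𝒜 be a stable matrix, let ℳ solve 𝒜ᵀℳ + ℳ𝒜 + 𝒞 = 0 and 𝒲 solve 𝒜𝒲 + 𝒲𝒜ᵀ + ℬ = 0, and let d𝒜, dℬ, d𝒞 be perturbation matrices with d𝒞 symmetric. If dℳ solves 𝒜ᵀ(dℳ) + (dℳ)𝒜 + (d𝒜)ᵀℳ + ℳ(d𝒜) = 0, then trace((dℳ)·ℬ) = trace(𝒲((d𝒜)ᵀℳ + ℳ(d𝒜))) = 2·trace(ℳ (d𝒜) 𝒲). -/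
/-!
Transposing the Lyapunov equations shows that `Mᵀ` and `Wᵀ` solve them as well; since `𝒜` is
stable, `σ(𝒜)` and `σ(-𝒜ᵀ)` are disjoint, so the Lyapunov operator `X ↦ 𝒜ᵀX + X𝒜` is injective
and `M`, `W` are symmetric. The first identity says that `X ↦ 𝒜ᵀX + X𝒜` and `Y ↦ 𝒜Y + Y𝒜ᵀ` are
adjoint for the trace pairing; the second follows from the symmetry of `M` and `W`.
-/

open Matrix Polynomial

namespace Matrix

variable {𝕜 m n : Type*} [Fintype m] [Fintype n]

section Sylvester

variable [DecidableEq m] [DecidableEq n]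

theorem mul_aeval_eq_aeval_mul_of_mul_eq_mul [CommRing 𝕜] {A : Matrix m m 𝕜} {B : Matrix n n 𝕜}
    {X : Matrix n m 𝕜} (h : X * A = B * X) (p : 𝕜[X]) :
    X * aeval A p = aeval B p * X := by
  have hpow (k : ℕ) : X * A ^ k = B ^ k * X := by
    induction k with
    | zero => simp
    | succ k ih => rw [pow_succ, ← Matrix.mul_assoc, ih, Matrix.mul_assoc, h, ← Matrix.mul_assoc,
        pow_succ]
  simp only [aeval_eq_sum_range, Matrix.mul_sum, Matrix.sum_mul, Matrix.mul_smul, hpow,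
    Matrix.smul_mul]

theorem eq_zero_of_mul_eq_mul_of_disjoint_spectrum [Field 𝕜] [IsAlgClosed 𝕜]
    {A : Matrix m m 𝕜} {B : Matrix n n 𝕜} {X : Matrix n m 𝕜} (h : X * A = B * X)
    (hAB : Disjoint (spectrum 𝕜 A) (spectrum 𝕜 B)) : X = 0 := by
  cases isEmpty_or_nonempty m
  · exact Subsingleton.elim _ _
  have hdeg : 0 < A.charpoly.degree := by
    rw [charpoly_degree_eq_dim]; exact_mod_cast Fintype.card_pos
  -- Cayley–Hamilton kills `χ_A(A)`, while `χ_A(B)` is invertible by spectral mapping: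
  -- its eigenvalues `χ_A(μ)`, `μ ∈ σ(B)`, are nonzero because the roots of `χ_A` form `σ(A)`.
  have hunit : IsUnit (aeval B A.charpoly) := by
    rw [← spectrum.zero_notMem_iff 𝕜, spectrum.map_polynomial_aeval_of_degree_pos B _ hdeg]
    rintro ⟨μ, hμB, hμA⟩
    exact hAB.notMem_of_mem_right hμB (mem_spectrum_iff_isRoot_charpoly.mpr hμA)
  have hX := mul_aeval_eq_aeval_mul_of_mul_eq_mul h A.charpoly
  rw [aeval_self_charpoly, Matrix.mul_zero] at hX
  calc X = (↑hunit.unit⁻¹ * aeval B A.charpoly) * X := by rw [IsUnit.val_inv_mul, Matrix.one_mul]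
    _ = 0 := by rw [Matrix.mul_assoc, ← hX, Matrix.mul_zero]

end Sylvester

section Lyapunov

variable [DecidableEq n]

theorem spectrum_transpose [Field 𝕜] (A : Matrix n n 𝕜) : spectrum 𝕜 Aᵀ = spectrum 𝕜 A := by
  ext μ
  simp only [mem_spectrum_iff_isRoot_charpoly, charpoly_transpose]

theorem eq_zero_of_transpose_mul_add_mul_eq_zero {A X : Matrix n n ℂ}
    (hA : ∀ μ ∈ spectrum ℂ A, μ.re < 0) (h : Aᵀ * X + X * A = 0) : X = 0 := by
  refine eq_zero_of_mul_eq_mul_of_disjoint_spectrum (A := A) (B := -Aᵀ) ?_ ?_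
  · rw [Matrix.neg_mul]; exact eq_neg_of_add_eq_zero_right h
  · rw [← spectrum.neg_eq, spectrum_transpose, Set.disjoint_left]
    intro μ hμ hμneg
    have hre := hA μ hμ
    have hre_neg := hA _ hμneg
    rw [Complex.neg_re] at hre_neg
    linarith

theorem eq_zero_of_transpose_mul_add_mul_eq_zero_of_real {A X : Matrix n n ℝ}
    (hA : ∀ μ ∈ spectrum ℂ (A.map Complex.ofReal), μ.re < 0) (h : Aᵀ * X + X * A = 0) :
    X = 0 := by
  have hℂ := congrArg Complex.ofRealHom.mapMatrix h
  simp only [map_add, map_mul, map_zero, RingHom.mapMatrix_apply, transpose_map] at hℂ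
  exact map_injective Complex.ofReal_injective (eq_zero_of_transpose_mul_add_mul_eq_zero hA hℂ)

theorem transpose_eq_of_transpose_mul_add_mul_add_eq_zero {A M C : Matrix n n ℝ}
    (hA : ∀ μ ∈ spectrum ℂ (A.map Complex.ofReal), μ.re < 0) (hC : Cᵀ = C)
    (h : Aᵀ * M + M * A + C = 0) : Mᵀ = M := by
  have hMt : Aᵀ * Mᵀ + Mᵀ * A + C = 0 := by
    simpa [transpose_mul, hC, add_comm, add_left_comm] using congrArg transpose h
  refine sub_eq_zero.mp (eq_zero_of_transpose_mul_add_mul_eq_zero_of_real hA ?_)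
  linear_combination (norm := noncomm_ring) hMt - h

end Lyapunov

theorem trace_mul_add_mul_transpose_comm [CommRing 𝕜] (A Y W : Matrix n n 𝕜) :
    (Y * (A * W + W * Aᵀ)).trace = (W * (Aᵀ * Y + Y * A)).trace := by
  have hAW : (Y * (A * W)).trace = (W * (Y * A)).trace := by
    rw [← Matrix.mul_assoc, trace_mul_comm]
  have hWA : (Y * (W * Aᵀ)).trace = (W * (Aᵀ * Y)).trace := by
    rw [trace_mul_comm, Matrix.mul_assoc]
  rw [Matrix.mul_add, Matrix.mul_add, trace_add, trace_add, hAW, hWA, add_comm]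

theorem trace_mul_transpose_mul_add_mul [CommRing 𝕜] {M W : Matrix n n 𝕜} (hM : Mᵀ = M)
    (hW : Wᵀ = W) (D : Matrix n n 𝕜) :
    (W * (Dᵀ * M + M * D)).trace = 2 * (M * D * W).trace := by
  have hDM : (W * (Dᵀ * M)).trace = (M * D * W).trace := by
    rw [← trace_transpose, transpose_mul, transpose_mul, transpose_transpose, hM, hW]
  rw [Matrix.mul_add, trace_add, hDM, trace_mul_comm W]
  ring

end Matrix

theorem h2_directional_derivative_trace_general {N : ℕ}
    (𝒜 M W B C dA dM : Matrix (Fin N) (Fin N) ℝ)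
    (h𝒜 : ∀ μ ∈ spectrum ℂ (𝒜.map (Complex.ofReal)), μ.re < 0)
    (hBsymm : Bᵀ = B) (hCsymm : Cᵀ = C)
    (hM : 𝒜ᵀ * M + M * 𝒜 + C = 0)
    (hW : 𝒜 * W + W * 𝒜ᵀ + B = 0)
    (hdM : 𝒜ᵀ * dM + dM * 𝒜 + dAᵀ * M + M * dA = 0) :
    (dM * B).trace = (W * (dAᵀ * M + M * dA)).trace ∧
    (W * (dAᵀ * M + M * dA)).trace = 2 * (M * dA * W).trace := by
  have h𝒜t : ∀ μ ∈ spectrum ℂ (𝒜ᵀ.map Complex.ofReal), μ.re < 0 := by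
    rwa [transpose_map, spectrum_transpose]
  have hMsymm := transpose_eq_of_transpose_mul_add_mul_add_eq_zero h𝒜 hCsymm hM
  have hWsymm := transpose_eq_of_transpose_mul_add_mul_add_eq_zero h𝒜t hBsymm
    (by rwa [transpose_transpose])
  have hB : B = -(𝒜 * W + W * 𝒜ᵀ) := eq_neg_of_add_eq_zero_right hW
  have hdAM : dAᵀ * M + M * dA = -(𝒜ᵀ * dM + dM * 𝒜) :=
    eq_neg_of_add_eq_zero_right (by rwa [← add_assoc])
  refine ⟨?_, trace_mul_transpose_mul_add_mul hMsymm hWsymm dA⟩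
  rw [hB, hdAM, Matrix.mul_neg, Matrix.mul_neg, trace_neg, trace_neg,
    trace_mul_add_mul_transpose_comm]

/-- Directional-derivative trace identity for the H₂ cost:
`trace(dM·B) = trace(W(dAᵀM + M dA)) = 2 trace(M dA W)`. -/
theorem h2_directional_derivative_trace {N : ℕ}
    (𝒜 M W B C dA dB dC dM : Matrix (Fin N) (Fin N) ℝ)
    (h𝒜 : ∀ μ ∈ spectrum ℂ (𝒜.map (Complex.ofReal)), μ.re < 0)
    (hBsymm : Bᵀ = B) (hCsymm : Cᵀ = C) (hdCsymm : dCᵀ = dC)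
    (hM : 𝒜ᵀ * M + M * 𝒜 + C = 0)
    (hW : 𝒜 * W + W * 𝒜ᵀ + B = 0)
    (hdM : 𝒜ᵀ * dM + dM * 𝒜 + dAᵀ * M + M * dA = 0) :
    (dM * B).trace = (W * (dAᵀ * M + M * dA)).trace ∧
    (W * (dAᵀ * M + M * dA)).trace = 2 * (M * dA * W).trace :=
  h2_directional_derivative_trace_general 𝒜 M W B C dA dM h𝒜 hBsymm hCsymm hM hW hdM
end
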